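/- Let G be a group. For every g ∈ G, the map ρ_g : CO(G) → ℝ/ℤ defined by ρ_g(c) = rot_c(g) is continuous, where CO(G) carries the subspace topology from the product topology on {0,±1}^{G³} and ℝ/ℤ carries the quotient topology. -/

import Mathlib

namespace Paper

variable {G : Type*} [Group G]

/-- A left-invariant circular ordering of a group `G`, as a function `G³ → {0, ±1} ⊆ ℤ`. -/
def IsCircOrd (c : G → G → G → ℤ) : Prop :=
  (∀ g₁ g₂ g₃ : G, c g₁ g₂ g₃ = 0 ↔ (g₁ = g₂ ∨ g₁ = g₃ ∨ g₂ = g₃)) ∧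
  (∀ g₁ g₂ g₃ : G, c g₁ g₂ g₃ = 0 ∨ c g₁ g₂ g₃ = 1 ∨ c g₁ g₂ g₃ = -1) ∧
  (∀ g₁ g₂ g₃ g₄ : G, c g₂ g₃ g₄ - c g₁ g₃ g₄ + c g₁ g₂ g₄ - c g₁ g₂ g₃ = 0) ∧
  (∀ g g₁ g₂ g₃ : G, c (g*g₁) (g*g₂) (g*g₃) = c g₁ g₂ g₃)

/-- The space CO(G) of circular orderings, topologized as a subspace of `ℤ^{G³}`
(all relevant values lie in the discrete set `{0,±1}`, and `ℤ` carries the discrete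
topology, so this is the subspace topology from the product topology on `{0,±1}^{G³}`). -/
abbrev CircOrd (G : Type*) [Group G] := {c : G → G → G → ℤ // IsCircOrd c}

open Classical in
/-- The cocycle `f_c`: `f_c(g,h) = 0` if `g = 1` or `h = 1` or `c(1,g,gh) = 1`,
and `f_c(g,h) = 1` otherwise (i.e. when `gh = 1 ≠ g`, or `c(1,gh,g) = 1`). -/
noncomputable def fc (c : G → G → G → ℤ) (g h : G) : ℤ :=
  if g = 1 ∨ h = 1 ∨ c 1 g (g*h) = 1 then 0 else 1

/-- Multiplication in the central extension `G̃_c = G × ℤ`: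
`(g,n)(h,m) = (gh, n+m+f_c(g,h))`. -/
noncomputable def liftMul (c : G → G → G → ℤ) (x y : G × ℤ) : G × ℤ :=
  (x.1 * y.1, x.2 + y.2 + fc c x.1 y.1)

/-- Powers (with natural number exponents) in `G̃_c`. -/
noncomputable def liftPow (c : G → G → G → ℤ) (x : G × ℤ) : ℕ → G × ℤ
  | 0 => (1, 0)
  | n+1 => liftMul c (liftPow c x n) x

/-- `[h]_c`: the unique integer `k` with `z_c^k ≤_c h <_c z_c^{k+1}`, where `<_c` is the
left-ordering of `G̃_c` with positive cone `{(g,n) : n ≥ 0} ∖ {(1,0)}` and `z_c = (1,1)`.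
Since `z_c^k = (1,k)` and `f_c(g,g⁻¹) = 1` for `g ≠ 1`, this is exactly the second
coordinate of `h`. -/
def liftFloor (h : G × ℤ) : ℤ := h.2

/-- The translation number `r̃ot_c(h)` of `h ∈ G̃_c`: the limit of `[hⁿ]_c / n`
(`limUnder` picks out the limit when it exists). -/
noncomputable def rotTilde (c : G → G → G → ℤ) (h : G × ℤ) : ℝ :=
  Filter.limUnder Filter.atTop (fun n : ℕ => (liftFloor (liftPow c h n) : ℝ) / (n : ℝ))

/-- The rotation number `rot_c(g) ∈ ℝ/ℤ`, computed using the lift `(g,0) ∈ G̃_c`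
(it is independent of the choice of lift). -/
noncomputable def rotc (c : G → G → G → ℤ) (g : G) : AddCircle (1:ℝ) :=
  ((rotTilde c (g, 0) : ℝ) : AddCircle (1:ℝ))

/-- `τ_c(g,h) = r̃ot_c(g̃h̃) − r̃ot_c(g̃) − r̃ot_c(h̃)`, computed using the lifts `(g,0)`
and `(h,0)` (it is independent of the choice of lifts). -/
noncomputable def tauc (c : G → G → G → ℤ) (g h : G) : ℝ :=
  rotTilde c (liftMul c (g,0) (h,0)) - rotTilde c (g,0) - rotTilde c (h,0)

/-- A positive cone of a group `G`: `P · P ⊆ P` and `P ∪ P⁻¹ = G ∖ {1}`.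
It determines a left-ordering by `g < h` iff `g⁻¹h ∈ P`. -/
def IsPositiveCone (P : Set G) : Prop :=
  (∀ a ∈ P, ∀ b ∈ P, a * b ∈ P) ∧ (P ∪ P⁻¹ = {g : G | g ≠ 1})

/-- The left-ordering determined by a positive cone. -/
def coneLt (P : Set G) (a b : G) : Prop := a⁻¹ * b ∈ P

open Classical in
/-- The secret left-ordering `c_<` determined by a positive cone `P`:
`c_<(a,b,c) = sign σ` where `σ` is the permutation sorting `(a,b,c)` into increasing
order, i.e. `c_< = 1` on positively cyclically ordered triples, `-1` on negatively
cyclically ordered triples, and `0` when the entries are not all distinct. -/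
noncomputable def circOfCone (P : Set G) : G → G → G → ℤ := fun a b c =>
  if (coneLt P a b ∧ coneLt P b c) ∨ (coneLt P b c ∧ coneLt P c a) ∨
      (coneLt P c a ∧ coneLt P a b) then 1
  else if (coneLt P c b ∧ coneLt P b a) ∨ (coneLt P b a ∧ coneLt P a c) ∨
      (coneLt P a c ∧ coneLt P c b) then -1
  else 0

/-- A circular ordering is a *secret left-ordering* if it is `c_<` for some
left-ordering `<` of `G`. -/
def IsSecret (c : G → G → G → ℤ) : Prop := ∃ P : Set G, IsPositiveCone P ∧ c = circOfCone P

/-!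
For a lift `x` of `g`, the sequence `n ↦ [xⁿ]_c` is additive up to the cocycle `f_c ∈ {0, 1}`,
because `G̃_c` is associative. A Fekete-type argument then puts `[xⁿ]_c / n` within `1 / n` of
`r̃ot_c(x)`, uniformly in `c`. Each `[xⁿ]_c` depends on finitely many values of `c`, so it is
locally constant on `CO(G)`, and `r̃ot_c(x)` is a uniform limit of continuous functions of `c`.
-/

open Filter Topology

def IsAlmostAdditive (u : ℕ → ℝ) : Prop :=
  ∀ m n, u m + u n ≤ u (m + n) ∧ u (m + n) ≤ u m + u n + 1

noncomputable def asymptoticSlope (u : ℕ → ℝ) : ℝ :=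
  ⨆ n : ℕ, u (n + 1) / (n + 1)

namespace IsAlmostAdditive

variable {u : ℕ → ℝ}

lemma succ_mul_le_apply_succ_mul (hu : IsAlmostAdditive u) (k n : ℕ) :
    (k + 1) * u n ≤ u ((k + 1) * n) ∧ u ((k + 1) * n) ≤ (k + 1) * u n + k := by
  induction k with
  | zero => simp
  | succ k ih =>
    rw [show (k + 1 + 1) * n = (k + 1) * n + n by ring]
    push_cast
    constructor <;> linarith [hu ((k + 1) * n) n, ih.1, ih.2]

lemma div_le_add_one_div (hu : IsAlmostAdditive u) (m n : ℕ) :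
    u (n + 1) / (n + 1) ≤ (u (m + 1) + 1) / (m + 1) := by
  rw [div_le_div_iff₀ (by positivity) (by positivity)]
  have hlow := (hu.succ_mul_le_apply_succ_mul m (n + 1)).1
  have hup := (hu.succ_mul_le_apply_succ_mul n (m + 1)).2
  rw [mul_comm (m + 1) (n + 1)] at hlow
  linarith

lemma bddAbove (hu : IsAlmostAdditive u) :
    BddAbove (Set.range fun n : ℕ => u (n + 1) / (n + 1)) :=
  ⟨u 1 + 1, Set.forall_mem_range.2 fun n => by
    simpa using hu.div_le_add_one_div 0 n⟩

lemma div_le_asymptoticSlope (hu : IsAlmostAdditive u) (n : ℕ) :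
    u (n + 1) / (n + 1) ≤ asymptoticSlope u :=
  le_ciSup hu.bddAbove n

lemma asymptoticSlope_le (hu : IsAlmostAdditive u) (n : ℕ) :
    asymptoticSlope u ≤ u (n + 1) / (n + 1) + 1 / (n + 1) :=
  ciSup_le fun m => by rw [← add_div]; exact hu.div_le_add_one_div n m

lemma tendsto_div (hu : IsAlmostAdditive u) :
    Tendsto (fun n : ℕ => u n / n) atTop (𝓝 (asymptoticSlope u)) := by
  rw [← tendsto_add_atTop_iff_nat 1]
  have hlow : Tendsto (fun n : ℕ => asymptoticSlope u - 1 / ((n : ℝ) + 1)) atTop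
      (𝓝 (asymptoticSlope u)) := by
    simpa using tendsto_one_div_add_atTop_nhds_zero_nat.const_sub (asymptoticSlope u)
  refine tendsto_of_tendsto_of_tendsto_of_le_of_le hlow tendsto_const_nhds (fun n => ?_)
    (fun n => ?_)
  · have := hu.asymptoticSlope_le n
    push_cast
    linarith
  · simpa using hu.div_le_asymptoticSlope n

end IsAlmostAdditive

lemma continuous_asymptoticSlope {X : Type*} [TopologicalSpace X] {u : X → ℕ → ℝ}
    (hu : ∀ x, IsAlmostAdditive (u x)) (hcont : ∀ n, Continuous fun x => u x n) :
    Continuous fun x => asymptoticSlope (u x) := by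
  have hunif : TendstoUniformly (fun n x => u x (n + 1) / (n + 1))
      (fun x => asymptoticSlope (u x)) atTop := by
    rw [Metric.tendstoUniformly_iff]
    intro ε hε
    obtain ⟨N, hN⟩ := exists_nat_one_div_lt hε
    filter_upwards [eventually_ge_atTop N] with n hn x
    have hlow := (hu x).div_le_asymptoticSlope n
    have hup := (hu x).asymptoticSlope_le n
    have hNn : 1 / ((n : ℝ) + 1) ≤ 1 / ((N : ℝ) + 1) := by gcongr
    rw [Real.dist_eq, abs_of_nonneg (by linarith)]
    linarith
  exact hunif.continuous (Frequently.of_forall fun n => (hcont (n + 1)).div_const _)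

lemma fc_nonneg (c : G → G → G → ℤ) (g h : G) : 0 ≤ fc c g h := by
  unfold fc; split <;> omega

lemma fc_le_one (c : G → G → G → ℤ) (g h : G) : fc c g h ≤ 1 := by
  unfold fc; split <;> omega

lemma continuous_fc (g h : G) : Continuous fun c : G → G → G → ℤ => fc c g h := by
  classical
  have hval : Continuous fun c : G → G → G → ℤ => c 1 g (g * h) := by fun_prop
  exact (continuous_of_discreteTopology
    (f := fun z : ℤ => if g = 1 ∨ h = 1 ∨ z = 1 then (0 : ℤ) else 1)).comp hval

lemma liftMul_one_right (c : G → G → G → ℤ) (x : G × ℤ) : liftMul c x (1, 0) = x := by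
  simp [liftMul, fc]

lemma liftPow_fst (c : G → G → G → ℤ) (x : G × ℤ) (n : ℕ) :
    (liftPow c x n).1 = x.1 ^ n := by
  induction n with
  | zero => simp [liftPow]
  | succ n ih => simp [liftPow, liftMul, ih, pow_succ]

lemma continuous_liftFloor_liftPow (x : G × ℤ) (n : ℕ) :
    Continuous fun c : G → G → G → ℤ => liftFloor (liftPow c x n) := by
  induction n with
  | zero => exact continuous_const
  | succ n ih =>
    simp only [liftPow, liftMul, liftFloor, liftPow_fst] at ih ⊢
    exact (ih.add continuous_const).add (continuous_fc _ _)

variable {c : G → G → G → ℤ}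

open Classical in
/-- Away from the identity `f_c(g,h) = (1 - c(1,g,gh))/2`; the indicator terms account for
the degenerate triples. -/
lemma IsCircOrd.two_mul_fc (hc : IsCircOrd c) (g h : G) :
    2 * fc c g h = 1 - c 1 g (g * h) - (if g = 1 then 1 else 0) - (if h = 1 then 1 else 0)
      + (if g * h = 1 then 1 else 0) := by
  obtain ⟨hzero, hval, -, -⟩ := hc
  by_cases hg : g = 1
  · subst hg; simp [fc, (hzero _ _ _).2]
  by_cases hh : h = 1
  · subst hh; simp [fc, hg, (hzero _ _ _).2]
  by_cases hgh : g * h = 1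
  · simp [fc, hg, hh, hgh, (hzero _ _ _).2]
  have hne : c 1 g (g * h) ≠ 0 := by
    rw [Ne, hzero]
    simp only [not_or]
    exact ⟨Ne.symm hg, Ne.symm hgh, fun e => hh (left_eq_mul.1 e)⟩
  rcases hval 1 g (g * h) with h0 | h1 | hm1
  · exact absurd h0 hne
  · simp [fc, hg, hh, hgh, h1]
  · simp [fc, hg, hh, hgh, hm1]

/-- The cocycle condition of `c` at `(1, g, gh, ghk)`, rewritten through `two_mul_fc`. -/
lemma IsCircOrd.fc_cocycle (hc : IsCircOrd c) (g h k : G) :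
    fc c g h + fc c (g * h) k = fc c h k + fc c g (h * k) := by
  have e₁ := hc.two_mul_fc g h
  have e₂ := hc.two_mul_fc (g * h) k
  have e₃ := hc.two_mul_fc h k
  have e₄ := hc.two_mul_fc g (h * k)
  have hinv := hc.2.2.2 g 1 h (h * k)
  have hcyc := hc.2.2.1 1 g (g * h) (g * (h * k))
  simp only [mul_one, mul_assoc] at *
  omega

lemma IsCircOrd.liftMul_assoc (hc : IsCircOrd c) (x y z : G × ℤ) :
    liftMul c (liftMul c x y) z = liftMul c x (liftMul c y z) := by
  have := hc.fc_cocycle x.1 y.1 z.1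
  ext
  · exact mul_assoc _ _ _
  · simp only [liftMul]
    omega

lemma IsCircOrd.liftPow_add (hc : IsCircOrd c) (x : G × ℤ) (m n : ℕ) :
    liftPow c x (m + n) = liftMul c (liftPow c x m) (liftPow c x n) := by
  induction n with
  | zero => exact (liftMul_one_right c _).symm
  | succ n ih => rw [← add_assoc, liftPow, ih, hc.liftMul_assoc]; rfl

lemma IsCircOrd.isAlmostAdditive_liftFloor_liftPow (hc : IsCircOrd c) (x : G × ℤ) :
    IsAlmostAdditive fun n => (liftFloor (liftPow c x n) : ℝ) := by
  intro m n
  have hsnd : (liftPow c x (m + n)).2 = (liftPow c x m).2 + (liftPow c x n).2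
      + fc c (x.1 ^ m) (x.1 ^ n) := by
    rw [hc.liftPow_add, liftMul, liftPow_fst, liftPow_fst]
  have h0 := fc_nonneg c (x.1 ^ m) (x.1 ^ n)
  have h1 := fc_le_one c (x.1 ^ m) (x.1 ^ n)
  simp only [liftFloor]
  constructor <;> exact_mod_cast (by omega)

lemma IsCircOrd.rotTilde_eq_asymptoticSlope (hc : IsCircOrd c) (x : G × ℤ) :
    rotTilde c x = asymptoticSlope fun n => (liftFloor (liftPow c x n) : ℝ) :=
  (hc.isAlmostAdditive_liftFloor_liftPow x).tendsto_div.limUnder_eq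

/-- Proposition 4.13: for each `g ∈ G`, the map `ρ_g : CO(G) → ℝ/ℤ`,
`ρ_g(c) = rot_c(g)`, is continuous. -/
theorem stmt6 (g : G) :
    Continuous (fun c : CircOrd G => rotc c.1 g) := by
  have hrot : (fun c : CircOrd G => rotc c.1 g) = fun c => ((asymptoticSlope fun n =>
      (liftFloor (liftPow c.1 (g, 0) n) : ℝ) : ℝ) : AddCircle (1 : ℝ)) :=
    funext fun c => congrArg _ (c.2.rotTilde_eq_asymptoticSlope _)
  rw [hrot]
  refine (AddCircle.continuous_mk' 1).comp
    (continuous_asymptoticSlope (fun c => c.2.isAlmostAdditive_liftFloor_liftPow _) fun n => ?_)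
  exact continuous_of_discreteTopology.comp
    ((continuous_liftFloor_liftPow _ n).comp continuous_subtype_val)

end Paper
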